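/- arXiv:1509.01675 — 3 statements merged into one kernel-verified Lean document; each statement's English description precedes it below -/
import Mathlib

section
/- Let D be a connected rooted digraph to which none of the reduction rules R1–R6 applies. Then every bag of the contracted graph D_c has at most two vertices and contains at most one contracted cut-edge; in particular, every bag has exactly one head and exactly one tail. -/
namespace OutBranching

variable {V : Type}

/-! ### Basic digraph notions -/

/-- `b` is reachable from `a` by a directed path. -/
def Reaches (E : V → V → Prop) (a b : V) : Prop := Relation.ReflTransGen E a b

/-- The rooted digraph `(E, r)` is connected: every vertex is reachable from the root. -/
def Connected (E : V → V → Prop) (r : V) : Prop := ∀ v, Reaches E r v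

/-- `b` is reachable from `a` by a directed path avoiding the vertex set `S`. -/
def ReachAvoid (E : V → V → Prop) (S : Set V) (a b : V) : Prop :=
  a ∉ S ∧ b ∉ S ∧ Relation.ReflTransGen (fun x y => E x y ∧ x ∉ S ∧ y ∉ S) a b

/-- A cut-vertex: a vertex `v ≠ r` whose removal makes some (other) vertex unreachable
from the root `r`. -/
def IsCutVertex (E : V → V → Prop) (r v : V) : Prop :=
  v ≠ r ∧ ∃ u, u ≠ v ∧ ¬ ReachAvoid E {v} r u

/-- The set of cut-vertices. -/
def cutVertices (E : V → V → Prop) (r : V) : Set V := {v | IsCutVertex E r v}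

/-- The edge relation obtained by deleting the single edge `(u,v)`. -/
def delEdge (E : V → V → Prop) (u v : V) : V → V → Prop :=
  fun a b => E a b ∧ ¬ (a = u ∧ b = v)

/-- A cut-edge: an edge `(u,v)` whose deletion makes some vertex unreachable from `r`. -/
def IsCutEdge (E : V → V → Prop) (r u v : V) : Prop :=
  E u v ∧ ∃ w, ¬ Reaches (delEdge E u v) r w

/-- A lonely cut-edge: no other cut-edge has the same tail. -/
def IsLonelyCutEdge (E : V → V → Prop) (r u v : V) : Prop :=
  IsCutEdge E r u v ∧ ∀ w, IsCutEdge E r u w → w = v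

/-- A branching cut-edge: some other cut-edge has the same tail. -/
def IsBranchingCutEdge (E : V → V → Prop) (r u v : V) : Prop :=
  IsCutEdge E r u v ∧ ∃ w, w ≠ v ∧ IsCutEdge E r u w

/-- In-neighbourhood. -/
def inN (E : V → V → Prop) (v : V) : Set V := {u | E u v}

/-- Out-neighbourhood. -/
def outN (E : V → V → Prop) (v : V) : Set V := {w | E v w}

/-- Private neighbors of `u`: out-neighbors of `u` not reachable from `r` in `D - u`. -/
def privateNbrs (E : V → V → Prop) (r u : V) : Set V :=
  {v | E u v ∧ ¬ ReachAvoid E {u} r v}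

/-- A special vertex: in-degree at least 3, or an incoming simple edge. -/
def Special (E : V → V → Prop) (v : V) : Prop :=
  3 ≤ (inN E v).ncard ∨ ∃ u, E u v ∧ ¬ E v u

/-- The set of special vertices. -/
def sp (E : V → V → Prop) : Set V := {v | Special E v}

/-! ### Outbranchings and `maxleaf` -/

/-- `T` is an outbranching of `(E, r)`: a spanning subdigraph in which every vertex is
reachable from `r`, every vertex other than `r` has in-degree exactly 1,
and `r` has in-degree 0. -/
structure IsOutbranching (E : V → V → Prop) (r : V) (T : V → V → Prop) : Prop where
  sub : ∀ ⦃a b⦄, T a b → E a b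
  reach : ∀ v, Reaches T r v
  indeg : ∀ v, v ≠ r → ∃! u, T u v
  rootIndeg : ∀ u, ¬ T u r

/-- The number of leaves (vertices of out-degree 0) of `T`. -/
noncomputable def leafCount (T : V → V → Prop) : ℕ := {v | ∀ w, ¬ T v w}.ncard

/-- The maximum number of leaves over all outbranchings of `(E, r)`. -/
noncomputable def maxleaf (E : V → V → Prop) (r : V) : ℕ :=
  sSup {n | ∃ T, IsOutbranching E r T ∧ leafCount T = n}

/-! ### The reduction rules (each `RuleᵢNA` says that rule i does NOT apply) -/

/-- Rule 1 does not apply: every vertex is reachable from the root. -/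
def Rule1NA (E : V → V → Prop) (r : V) : Prop := Connected E r

/-- Rule 2 does not apply: no cut-vertex has exactly one incoming edge,
and no cut-vertex has exactly one outgoing edge. -/
def Rule2NA (E : V → V → Prop) (r : V) : Prop :=
  ∀ v, IsCutVertex E r v → ¬ (∃! u, E u v) ∧ ¬ (∃! w, E v w)

/-- Rule 3 does not apply: there is no proper bipath of length 4, i.e. no sequence
of 5 distinct vertices `a b c d e` whose three internal vertices have their in- and
out-neighbourhoods equal to the pair of adjacent vertices on the sequence. -/
def Rule3NA (E : V → V → Prop) : Prop :=
  ¬ ∃ a b c d e : V, List.Pairwise (· ≠ ·) [a, b, c, d, e] ∧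
    (∀ w, (E w b ↔ w = a ∨ w = c) ∧ (E b w ↔ w = a ∨ w = c)) ∧
    (∀ w, (E w c ↔ w = b ∨ w = d) ∧ (E c w ↔ w = b ∨ w = d)) ∧
    (∀ w, (E w d ↔ w = c ∨ w = e) ∧ (E d w ↔ w = c ∨ w = e))

/-- Rule 4 does not apply: there is no vertex `x` with an in-neighbor `y` such that
removing all in-neighbors of `x` other than `y` disconnects `y` from `r`. -/
def Rule4NA (E : V → V → Prop) (r : V) : Prop :=
  ¬ ∃ x y, E y x ∧ ¬ ReachAvoid E {v | E v x ∧ v ≠ y} r y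

/-- Rule 5 does not apply: there are no two cut-edges `(x₁,y₁)`, `(x₂,y₂)` with both
`(x₁,x₂)` and `(x₂,x₁)` being edges. -/
def Rule5NA (E : V → V → Prop) (r : V) : Prop :=
  ¬ ∃ x₁ y₁ x₂ y₂, IsCutEdge E r x₁ y₁ ∧ IsCutEdge E r x₂ y₂ ∧ E x₁ x₂ ∧ E x₂ x₁

/-- Rule 6 does not apply: there is no cut-edge `(u,v)` with `(v,u)` an edge. -/
def Rule6NA (E : V → V → Prop) (r : V) : Prop :=
  ¬ ∃ u v, IsCutEdge E r u v ∧ E v u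

/-- Reduction rules R1–R4 do not apply. -/
def Reduced4 (E : V → V → Prop) (r : V) : Prop :=
  Rule1NA E r ∧ Rule2NA E r ∧ Rule3NA E ∧ Rule4NA E r

/-- Reduction rules R1–R6 do not apply. -/
def Reduced6 (E : V → V → Prop) (r : V) : Prop :=
  Reduced4 E r ∧ Rule5NA E r ∧ Rule6NA E r

/-! ### Contraction -/

/-- The setoid on `V` generated by identifying the endpoints of the edges in `C`. -/
def contractSetoid (C : V → V → Prop) : Setoid V := Relation.EqvGen.setoid C

/-- Vertices of the digraph obtained by contracting all edges in `C`. -/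
def CVert (C : V → V → Prop) : Type := Quotient (contractSetoid C)

/-- The projection of a vertex to the contracted digraph. -/
def cmk (C : V → V → Prop) (x : V) : CVert C := Quotient.mk (contractSetoid C) x

/-- The edge relation of the digraph obtained from `E` by contracting all edges in `C`
(loops and parallel edges are discarded). -/
def contractE (E : V → V → Prop) (C : V → V → Prop) : CVert C → CVert C → Prop :=
  fun a b => a ≠ b ∧ ∃ x y, cmk C x = a ∧ cmk C y = b ∧ E x y

/-- The relation consisting of a single edge `(u,v)` (used for contracting one edge). -/
def singleEdge (u v : V) : V → V → Prop := fun a b => a = u ∧ b = v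

/-- The relation of lonely cut-edges. -/
def lonelyRel (E : V → V → Prop) (r : V) : V → V → Prop :=
  fun u v => IsLonelyCutEdge E r u v

/-- Vertices of the contracted graph `D_c`, obtained by contracting all lonely cut-edges. -/
def ContractedVert (E : V → V → Prop) (r : V) : Type := CVert (lonelyRel E r)

/-- The edge relation of the contracted graph `D_c`. -/
def contractedE (E : V → V → Prop) (r : V) : ContractedVert E r → ContractedVert E r → Prop :=
  contractE E (lonelyRel E r)

/-- The root of the contracted graph `D_c`. -/
def contractedRoot (E : V → V → Prop) (r : V) : ContractedVert E r := cmk (lonelyRel E r) r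

/-- The bag of a vertex of `D_c`: the set of original vertices contracted into it. -/
def bag (E : V → V → Prop) (r : V) (a : ContractedVert E r) : Set V :=
  {x | cmk (lonelyRel E r) x = a}

/-- `t` is a tail of the bag `B`: it is the tail of a contracted (lonely) cut-edge inside `B`,
or `B` is the singleton `{t}`. -/
def IsTailOf (E : V → V → Prop) (r : V) (B : Set V) (t : V) : Prop :=
  t ∈ B ∧ (B = {t} ∨ ∃ h ∈ B, IsLonelyCutEdge E r t h)

/-- `h` is a head of the bag `B`: it is the head of a contracted (lonely) cut-edge inside `B`,
or `B` is the singleton `{h}`. -/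
def IsHeadOf (E : V → V → Prop) (r : V) (B : Set V) (h : V) : Prop :=
  h ∈ B ∧ (B = {h} ∨ ∃ t ∈ B, IsLonelyCutEdge E r t h)

/-- Two bags are linked if there is an edge of `D` in each direction between them. -/
def LinkedBags (E : V → V → Prop) (A B : Set V) : Prop :=
  (∃ x ∈ A, ∃ y ∈ B, E x y) ∧ (∃ x ∈ B, ∃ y ∈ A, E x y)

/-! ### Duplication of a vertex -/

/-- Duplicating the vertex `v`: the new vertex is `none`, receiving/sending edges exactly
as `v` does. -/
def dupE (E : V → V → Prop) (v : V) : Option V → Option V → Prop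
  | some a, some b => E a b
  | some a, none => E a v
  | none, some b => E v b
  | none, none => False

/-! ### Undirected notions: underlying graph, minors -/

/-- The underlying undirected simple graph of a digraph. -/
def underlying (E : V → V → Prop) : SimpleGraph V where
  Adj a b := a ≠ b ∧ (E a b ∨ E b a)
  symm := ⟨fun a b h => ⟨Ne.symm h.1, h.2.symm⟩⟩
  loopless := ⟨fun a h => h.1 rfl⟩

/-- `H` is a minor of `G`: there is a minor model of `H` in `G`. -/
def IsMinorOf {W U : Type} (H : SimpleGraph W) (G : SimpleGraph U) : Prop :=
  ∃ I : W → Set U,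
    (∀ u, (G.induce (I u)).Connected) ∧
    (Pairwise fun u v => Disjoint (I u) (I v)) ∧
    (∀ u v, H.Adj u v → ∃ x ∈ I u, ∃ y ∈ I v, G.Adj x y)

/-- `G` is `H`-minor-free. -/
def MinorFree {W U : Type} (H : SimpleGraph W) (G : SimpleGraph U) : Prop := ¬ IsMinorOf H G

/-! ### Weak bipaths -/

/-- A weak bipath in a digraph: a sequence of at least 3 distinct vertices whose internal
vertices have in-neighbourhood exactly the two adjacent vertices of the sequence, both
of which are also out-neighbours. -/
structure WeakBipath {W : Type} (E : W → W → Prop) where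
  len : ℕ
  u : Fin (len + 3) → W
  inj : Function.Injective u
  cond : ∀ i j k : Fin (len + 3), j.val + 1 = i.val → i.val + 1 = k.val →
    (∀ w, E w (u i) ↔ (w = u j ∨ w = u k)) ∧ E (u i) (u j) ∧ E (u i) (u k)

/-- The set of internal vertices of a weak bipath. -/
def WeakBipath.internal {W : Type} {E : W → W → Prop} (P : WeakBipath E) : Set W :=
  {w | ∃ i : Fin (P.len + 3), 0 < i.val ∧ i.val < P.len + 2 ∧ P.u i = w}

/-- The first extremity of a weak bipath. -/
def WeakBipath.first {W : Type} {E : W → W → Prop} (P : WeakBipath E) : W := P.u 0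

/-- The last extremity of a weak bipath. -/
def WeakBipath.last {W : Type} {E : W → W → Prop} (P : WeakBipath E) : W :=
  P.u (Fin.last (P.len + 2))

/-! The heart of the argument is that, under R2 and R4, no two cut-edges are consecutive: if
`(u,v)` and `(v,w)` are cut-edges then `v` is a cut-vertex, so by R2 it has an in-neighbour
`u' ≠ u`, and R4 gives a path from `r` to `u'` avoiding `v`; with the edge `u'v` this bypasses
the cut-edge `(u,v)`. Lonely cut-edges are also functional (by loneliness) and injective (the
tail of a cut-edge is the only in-neighbour of its head reachable without passing through the
head), so the equivalence they generate only identifies the two endpoints of a single edge. -/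

theorem eqvGen_iff_of_functional {α : Type*} {L : α → α → Prop}
    (hfun : ∀ x y y', L x y → L x y' → y = y')
    (hinj : ∀ x x' y, L x y → L x' y → x = x')
    (hcons : ∀ x y z, L x y → L y z → False) {x y : α} :
    Relation.EqvGen L x y ↔ x = y ∨ L x y ∨ L y x := by
  refine ⟨fun h => ?_, ?_⟩
  · induction h with
    | rel a b hab => exact Or.inr (Or.inl hab)
    | refl a => exact Or.inl rfl
    | symm a b _ ih =>
      rcases ih with rfl | h | h
      · exact Or.inl rfl
      · exact Or.inr (Or.inr h)
      · exact Or.inr (Or.inl h)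
    | trans a b c _ _ ih₁ ih₂ =>
      rcases ih₁ with rfl | h₁ | h₁
      · exact ih₂
      · rcases ih₂ with rfl | h₂ | h₂
        exacts [Or.inr (Or.inl h₁), (hcons _ _ _ h₁ h₂).elim, Or.inl (hinj _ _ _ h₁ h₂)]
      · rcases ih₂ with rfl | h₂ | h₂
        exacts [Or.inr (Or.inr h₁), Or.inl (hfun _ _ _ h₁ h₂), (hcons _ _ _ h₂ h₁).elim]
  · rintro (rfl | h | h)
    · exact Relation.EqvGen.refl _
    · exact Relation.EqvGen.rel _ _ h
    · exact Relation.EqvGen.symm _ _ (Relation.EqvGen.rel _ _ h)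

section CutEdges

variable {E : V → V → Prop} {r : V}

theorem reaches_delEdge_or {u v b : V} (h : Reaches E r b) :
    Reaches (delEdge E u v) r b ∨ Reaches (delEdge E u v) v b := by
  induction h with
  | refl => exact Or.inl Relation.ReflTransGen.refl
  | @tail a c _ hac ih =>
    by_cases hdel : a = u ∧ c = v
    · exact Or.inr (hdel.2 ▸ Relation.ReflTransGen.refl)
    · exact ih.imp (·.tail ⟨hac, hdel⟩) (·.tail ⟨hac, hdel⟩)

theorem ReachAvoid.reaches_delEdge {S : Set V} {u v x : V} (h : ReachAvoid E S r x)
    (huv : u ∈ S ∨ v ∈ S) : Reaches (delEdge E u v) r x :=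
  Relation.ReflTransGen.mono (fun _ _ hab => ⟨hab.1, fun ⟨hau, hbv⟩ =>
    huv.elim (fun hu => hab.2.1 (hau ▸ hu)) fun hv => hab.2.2 (hbv ▸ hv)⟩) _ _ h.2.2

theorem reachAvoid_or_exists_entry {R : V → V → Prop} (hRE : ∀ a b, R a b → E a b) {v b : V}
    (hrv : r ≠ v) (h : Relation.ReflTransGen R r b) :
    ReachAvoid E {v} r b ∨ ∃ x, R x v ∧ ReachAvoid E {v} r x := by
  induction h with
  | refl => exact Or.inl ⟨hrv, hrv, Relation.ReflTransGen.refl⟩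
  | @tail a c _ hac ih =>
    rcases ih with ha | hentry
    · by_cases hcv : c = v
      · exact Or.inr ⟨a, hcv ▸ hac, ha⟩
      · exact Or.inl ⟨ha.1, hcv, ha.2.2.tail ⟨hRE a c hac, ha.2.1, hcv⟩⟩
    · exact Or.inr hentry

theorem exists_entry_reachAvoid (hconn : Connected E r) {v : V} (hrv : r ≠ v) :
    ∃ x, E x v ∧ ReachAvoid E {v} r x :=
  (reachAvoid_or_exists_entry (fun _ _ => id) hrv (hconn v)).resolve_left fun h => h.2.1 rfl

theorem IsCutEdge.not_reaches_delEdge (hconn : Connected E r) {u v : V}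
    (hcut : IsCutEdge E r u v) : ¬ Reaches (delEdge E u v) r v := by
  obtain ⟨-, w, hw⟩ := hcut
  exact fun hv => hw ((reaches_delEdge_or (hconn w)).elim id hv.trans)

theorem IsCutEdge.root_ne (hconn : Connected E r) {u v : V} (hcut : IsCutEdge E r u v) :
    r ≠ v := by
  rintro rfl
  exact hcut.not_reaches_delEdge hconn Relation.ReflTransGen.refl

theorem IsCutEdge.eq_of_reachAvoid (hconn : Connected E r) {u v x : V}
    (hcut : IsCutEdge E r u v) (hxv : E x v) (hx : ReachAvoid E {v} r x) : x = u := by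
  by_contra hxu
  exact hcut.not_reaches_delEdge hconn
    ((hx.reaches_delEdge (Or.inr rfl)).tail ⟨hxv, fun h => hxu h.1⟩)

theorem IsCutEdge.ne (hconn : Connected E r) {u v : V} (hcut : IsCutEdge E r u v) : u ≠ v := by
  rintro rfl
  obtain ⟨x, hxu, hx⟩ := exists_entry_reachAvoid hconn (hcut.root_ne hconn)
  exact hx.2.1 (hcut.eq_of_reachAvoid hconn hxu hx)

theorem IsCutEdge.tail_unique (hconn : Connected E r) {u u' v : V}
    (hcut : IsCutEdge E r u v) (hcut' : IsCutEdge E r u' v) : u = u' := by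
  obtain ⟨x, hxv, hx⟩ := exists_entry_reachAvoid hconn (hcut.root_ne hconn)
  rw [← hcut.eq_of_reachAvoid hconn hxv hx, ← hcut'.eq_of_reachAvoid hconn hxv hx]

theorem IsCutEdge.isCutVertex (hconn : Connected E r) {v w : V} (hcut : IsCutEdge E r v w)
    (hvr : v ≠ r) : IsCutVertex E r v :=
  ⟨hvr, w, (hcut.ne hconn).symm, fun hw =>
    hcut.not_reaches_delEdge hconn (hw.reaches_delEdge (Or.inl rfl))⟩

theorem not_isCutEdge_of_isCutEdge (hconn : Connected E r) (hR2 : Rule2NA E r)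
    (hR4 : Rule4NA E r) {u v w : V} (huv : IsCutEdge E r u v) : ¬ IsCutEdge E r v w := by
  intro hvw
  have hrv := huv.root_ne hconn
  obtain ⟨u', hu'v, hu'u⟩ : ∃ u', E u' v ∧ u' ≠ u := by
    by_contra! hno
    exact (hR2 v (hvw.isCutVertex hconn hrv.symm)).1 ⟨u, huv.1, hno⟩
  have hu' : ReachAvoid E {z | E z v ∧ z ≠ u'} r u' := by
    by_contra h
    exact hR4 ⟨v, u', hu'v, h⟩
  -- `u'` is the only in-neighbour of `v` left, so a walk to it enters `v`, if at all, from `u'`.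
  have hu'_avoid : ReachAvoid E {v} r u' := by
    rcases reachAvoid_or_exists_entry (fun _ _ h => h.1) hrv hu'.2.2 with h | ⟨x, hxv, hx⟩
    · exact h
    · obtain rfl : x = u' := by_contra fun hxu' => hxv.2.1 ⟨hxv.1, hxu'⟩
      exact hx
  exact hu'u (huv.eq_of_reachAvoid hconn hu'v hu'_avoid)

end CutEdges

section Bags

variable {E : V → V → Prop} {r : V}

theorem cmk_lonelyRel_eq_iff (hconn : Connected E r) (hR2 : Rule2NA E r) (hR4 : Rule4NA E r)
    {x y : V} : cmk (lonelyRel E r) x = cmk (lonelyRel E r) y ↔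
      x = y ∨ IsLonelyCutEdge E r x y ∨ IsLonelyCutEdge E r y x :=
  Quotient.eq.trans <| eqvGen_iff_of_functional
    (fun _ _ _ h h' => (h.2 _ h'.1).symm)
    (fun _ _ _ h h' => h.1.tail_unique hconn h'.1)
    (fun _ _ _ h h' => not_isCutEdge_of_isCutEdge hconn hR2 hR4 h.1 h'.1)

theorem IsLonelyCutEdge.eq_of_cmk_eq (hconn : Connected E r) (hR2 : Rule2NA E r)
    (hR4 : Rule4NA E r) {x y x' y' : V} (h : IsLonelyCutEdge E r x y)
    (h' : IsLonelyCutEdge E r x' y') (hxx' : cmk (lonelyRel E r) x = cmk (lonelyRel E r) x') :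
    x = x' ∧ y = y' := by
  rcases (cmk_lonelyRel_eq_iff hconn hR2 hR4).1 hxx' with rfl | hx | hx
  · exact ⟨rfl, (h.2 _ h'.1).symm⟩
  · obtain rfl := h.2 _ hx.1
    exact (not_isCutEdge_of_isCutEdge hconn hR2 hR4 h.1 h'.1).elim
  · obtain rfl := h'.2 _ hx.1
    exact (not_isCutEdge_of_isCutEdge hconn hR2 hR4 h'.1 h.1).elim

theorem bag_eq_singleton_or_pair (hconn : Connected E r) (hR2 : Rule2NA E r)
    (hR4 : Rule4NA E r) (a : ContractedVert E r) :
    (∃ x, bag E r a = {x}) ∨ ∃ t h, IsLonelyCutEdge E r t h ∧ bag E r a = {t, h} := by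
  obtain ⟨x₀, rfl⟩ := Quotient.exists_rep a
  have hmem : ∀ x, x ∈ bag E r ⟦x₀⟧ ↔
      x = x₀ ∨ IsLonelyCutEdge E r x x₀ ∨ IsLonelyCutEdge E r x₀ x :=
    fun _ => cmk_lonelyRel_eq_iff hconn hR2 hR4
  have hcons := fun {x y z : V} (h : IsLonelyCutEdge E r x y) (h' : IsLonelyCutEdge E r y z) =>
    not_isCutEdge_of_isCutEdge hconn hR2 hR4 h.1 h'.1
  by_cases hout : ∃ y, IsLonelyCutEdge E r x₀ y
  · obtain ⟨y, hy⟩ := hout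
    refine Or.inr ⟨x₀, y, hy, Set.ext fun x => (hmem x).trans ?_⟩
    refine ⟨fun hx => ?_, fun hx => ?_⟩
    · rcases hx with rfl | hx | hx
      exacts [Or.inl rfl, (hcons hx hy).elim, Or.inr (hy.2 _ hx.1)]
    · rcases hx with rfl | rfl
      exacts [Or.inl rfl, Or.inr (Or.inr hy)]
  by_cases hin : ∃ y, IsLonelyCutEdge E r y x₀
  · obtain ⟨y, hy⟩ := hin
    refine Or.inr ⟨y, x₀, hy, Set.ext fun x => (hmem x).trans ?_⟩
    refine ⟨fun hx => ?_, fun hx => ?_⟩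
    · rcases hx with rfl | hx | hx
      exacts [Or.inr rfl, Or.inl (hx.1.tail_unique hconn hy.1), (hout ⟨x, hx⟩).elim]
    · rcases hx with rfl | rfl
      exacts [Or.inr (Or.inl hy), Or.inl rfl]
  · push Not at hout hin
    refine Or.inl ⟨x₀, Set.ext fun x => (hmem x).trans ?_⟩
    simp only [hout, hin, or_false, Set.mem_singleton_iff]

theorem IsHeadOf.unique_of_bag (hconn : Connected E r) (hR2 : Rule2NA E r) (hR4 : Rule4NA E r)
    {a : ContractedVert E r} {h h' : V} (hh : IsHeadOf E r (bag E r a) h)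
    (hh' : IsHeadOf E r (bag E r a) h') : h = h' := by
  obtain ⟨hm, hsingle | ⟨t, ht, hL⟩⟩ := hh
  · exact (hsingle ▸ hh'.1 : h' ∈ ({h} : Set V)).symm
  obtain ⟨hm', hsingle' | ⟨t', ht', hL'⟩⟩ := hh'
  · exact (hsingle' ▸ hm : h ∈ ({h'} : Set V))
  · exact (hL.eq_of_cmk_eq hconn hR2 hR4 hL' (ht.trans ht'.symm)).2

theorem IsTailOf.unique_of_bag (hconn : Connected E r) (hR2 : Rule2NA E r) (hR4 : Rule4NA E r)
    {a : ContractedVert E r} {t t' : V} (ht : IsTailOf E r (bag E r a) t)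
    (ht' : IsTailOf E r (bag E r a) t') : t = t' := by
  obtain ⟨hm, hsingle | ⟨h, -, hL⟩⟩ := ht
  · exact (hsingle ▸ ht'.1 : t' ∈ ({t} : Set V)).symm
  obtain ⟨hm', hsingle' | ⟨h', -, hL'⟩⟩ := ht'
  · exact (hsingle' ▸ hm : t ∈ ({t'} : Set V))
  · exact (hL.eq_of_cmk_eq hconn hR2 hR4 hL' (hm.trans hm'.symm)).1

end Bags

theorem bag_size_at_most_two_general {V : Type} (E : V → V → Prop) (r : V)
    (hconn : Connected E r) (hred : Reduced6 E r) :
    ∀ a : ContractedVert E r,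
      (bag E r a).ncard ≤ 2 ∧
      (∀ x y x' y', x ∈ bag E r a → y ∈ bag E r a → x' ∈ bag E r a → y' ∈ bag E r a →
          IsLonelyCutEdge E r x y → IsLonelyCutEdge E r x' y' → x = x' ∧ y = y') ∧
      (∃! h, IsHeadOf E r (bag E r a) h) ∧ (∃! t, IsTailOf E r (bag E r a) t) := by
  obtain ⟨⟨-, hR2, -, hR4⟩, -, -⟩ := hred
  intro a
  have hshape := bag_eq_singleton_or_pair hconn hR2 hR4 a
  refine ⟨?_, fun x y x' y' hx _ hx' _ hL hL' =>
    hL.eq_of_cmk_eq hconn hR2 hR4 hL' (hx.trans hx'.symm), ?_, ?_⟩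
  · rcases hshape with ⟨x, hx⟩ | ⟨t, h, hL, hth⟩
    · simp [hx]
    · rw [hth, Set.ncard_pair (hL.1.ne hconn)]
  · obtain ⟨h, hh⟩ : ∃ h, IsHeadOf E r (bag E r a) h := by
      rcases hshape with ⟨x, hx⟩ | ⟨t, h, hL, hth⟩
      · exact ⟨x, hx ▸ rfl, Or.inl hx⟩
      · exact ⟨h, hth ▸ Or.inr rfl, Or.inr ⟨t, hth ▸ Or.inl rfl, hL⟩⟩
    exact ⟨h, hh, fun h' hh' => (hh.unique_of_bag hconn hR2 hR4 hh').symm⟩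
  · obtain ⟨t, ht⟩ : ∃ t, IsTailOf E r (bag E r a) t := by
      rcases hshape with ⟨x, hx⟩ | ⟨t, h, hL, hth⟩
      · exact ⟨x, hx ▸ rfl, Or.inl hx⟩
      · exact ⟨t, hth ▸ Or.inl rfl, Or.inr ⟨h, hth ▸ Or.inr rfl, hL⟩⟩
    exact ⟨t, ht, fun t' ht' => (ht.unique_of_bag hconn hR2 hR4 ht').symm⟩

/-- If none of the reduction rules R1–R6 applies to the connected rooted
digraph `D`, then every bag of the contracted graph `D_c` has at most 2 vertices and
contains at most one contracted (lonely) cut-edge; in particular every bag has exactly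
one head and exactly one tail. -/
theorem bag_size_at_most_two {V : Type} [Fintype V] (E : V → V → Prop) (r : V)
    (hroot : ∀ u, ¬ E u r) (hconn : Connected E r) (hred : Reduced6 E r) :
    ∀ a : ContractedVert E r,
      (bag E r a).ncard ≤ 2 ∧
      (∀ x y x' y', x ∈ bag E r a → y ∈ bag E r a → x' ∈ bag E r a → y' ∈ bag E r a →
          IsLonelyCutEdge E r x y → IsLonelyCutEdge E r x' y' → x = x' ∧ y = y') ∧
      (∃! h, IsHeadOf E r (bag E r a) h) ∧ (∃! t, IsTailOf E r (bag E r a) t) :=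
  bag_size_at_most_two_general E r hconn hred

end OutBranching
end

section
/- Let D be a connected rooted digraph to which reduction rules R1–R4 do not apply. Then for any two distinct bags A and B of the contracted graph D_c, every edge of D from a vertex of A to a vertex of B has its head equal to the tail t_B of B (in particular, no edge from A ends at the head of a contracted cut-edge inside B). -/
namespace OutBranching

variable {V : Type}

/-! Under R1 and R4 the tail of a cut-edge is the only in-neighbour of its head: by R4 a second
in-neighbour `x` of the head is reachable from the root without passing through the tail, and
the edge from `x` then reaches the head while bypassing the cut-edge, after which every vertex
is reachable without it. Hence an edge entering a bag from outside cannot end at the head of a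
contracted edge; its head, being identified with the other vertices of the bag, must then be the
tail of a contracted edge. -/

section CutEdge

variable {E : V → V → Prop} {r t y : V}

theorem reaches_delEdge_of_reaches_head {w : V} (hy : Reaches (delEdge E t y) r y)
    (hw : Reaches E r w) : Reaches (delEdge E t y) r w := by
  induction hw with
  | refl => exact .refl
  | @tail p q _ hpq ih =>
    by_cases hq : p = t ∧ q = y
    · exact hq.2 ▸ hy
    · exact ih.tail ⟨hpq, hq⟩

theorem IsCutEdge.not_reaches_head (hconn : Connected E r) (h : IsCutEdge E r t y) :
    ¬ Reaches (delEdge E t y) r y := fun hy =>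
  let ⟨_, w, hw⟩ := h
  hw (reaches_delEdge_of_reaches_head hy (hconn w))

theorem IsCutEdge.eq_of_adj_head (hconn : Connected E r) (h4 : Rule4NA E r)
    (h : IsCutEdge E r t y) {x : V} (hxy : E x y) : x = t := by
  by_contra hxt
  have hx : ReachAvoid E {v | E v y ∧ v ≠ x} r x := not_not.mp fun hx => h4 ⟨y, x, hxy, hx⟩
  have hrx : Reaches (delEdge E t y) r x :=
    Relation.ReflTransGen.mono (fun p q ⟨hpq, hp, _⟩ =>
      ⟨hpq, fun ⟨hpt, hqy⟩ => hp ⟨hpt ▸ hqy ▸ h.1, hpt ▸ Ne.symm hxt⟩⟩) _ _ hx.2.2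
  exact h.not_reaches_head hconn (hrx.tail ⟨hxy, fun hx => hxt hx.1⟩)

end CutEdge

section Contraction

theorem _root_.Relation.EqvGen.eq_or_rel_endpoints {C : V → V → Prop} {a b : V}
    (h : Relation.EqvGen C a b) :
    a = b ∨ ((∃ w, C a w ∨ C w a) ∧ (∃ w, C b w ∨ C w b)) := by
  induction h with
  | rel p q hpq => exact .inr ⟨⟨q, .inl hpq⟩, ⟨p, .inr hpq⟩⟩
  | refl => exact .inl rfl
  | symm p q _ ih => exact ih.imp Eq.symm And.symm
  | trans p q s _ _ ih₁ ih₂ =>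
    rcases ih₁ with rfl | ⟨hp, hq⟩
    · exact ih₂
    rcases ih₂ with rfl | ⟨-, hs⟩
    · exact .inr ⟨hp, hq⟩
    · exact .inr ⟨hp, hs⟩

variable {E : V → V → Prop} {r : V}

theorem cmk_eq_of_isLonelyCutEdge {t y : V} (h : IsLonelyCutEdge E r t y) :
    cmk (lonelyRel E r) t = cmk (lonelyRel E r) y :=
  Quotient.sound (.rel t y h)

theorem isTailOf_bag_of_not_lonely_head {b : ContractedVert E r} {y : V} (hy : y ∈ bag E r b)
    (hhead : ∀ t, ¬ IsLonelyCutEdge E r t y) : IsTailOf E r (bag E r b) y := by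
  refine ⟨hy, or_iff_not_imp_left.mpr fun hsing => ?_⟩
  obtain ⟨z, hz, hzy⟩ : ∃ z ∈ bag E r b, z ≠ y := by
    simpa [Set.eq_singleton_iff_unique_mem, hy] using hsing
  have hyz : Relation.EqvGen (lonelyRel E r) y z := Quotient.exact (hy.trans hz.symm)
  obtain hyz | ⟨⟨w, hw | hw⟩, -⟩ := hyz.eq_or_rel_endpoints
  · exact absurd hyz.symm hzy
  · exact ⟨w, (cmk_eq_of_isLonelyCutEdge hw).symm.trans hy, hw⟩
  · exact absurd hw (hhead w)

end Contraction

theorem edge_between_bags_hits_tail_general {V : Type} (E : V → V → Prop) (r : V)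
    (hred : Reduced4 E r) :
    ∀ a b : ContractedVert E r, a ≠ b →
      ∀ x y, x ∈ bag E r a → y ∈ bag E r b → E x y →
        IsTailOf E r (bag E r b) y ∧ ¬ ∃ t ∈ bag E r b, IsLonelyCutEdge E r t y := by
  intro a b hab x y hxa hyb hxy
  have hhead : ∀ t, ¬ IsLonelyCutEdge E r t y := by
    intro t ht
    obtain rfl := ht.1.eq_of_adj_head hred.1 hred.2.2.2 hxy
    exact hab (hxa.symm.trans ((cmk_eq_of_isLonelyCutEdge ht).trans hyb))
  exact ⟨isTailOf_bag_of_not_lonely_head hyb hhead, fun ⟨t, _, ht⟩ => hhead t ht⟩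

/-- If reduction rules R1–R4 do not apply to the connected rooted digraph
`D`, then for any two distinct bags `A`, `B` of `D_c`, every edge of `D` from `A` to `B`
has its head equal to the tail of `B`; in particular no edge from `A` ends at the head of
a contracted cut-edge inside `B`. -/
theorem edge_between_bags_hits_tail {V : Type} [Fintype V] (E : V → V → Prop) (r : V)
    (hroot : ∀ u, ¬ E u r) (hred : Reduced4 E r) :
    ∀ a b : ContractedVert E r, a ≠ b →
      ∀ x y, x ∈ bag E r a → y ∈ bag E r b → E x y →
        IsTailOf E r (bag E r b) y ∧ ¬ ∃ t ∈ bag E r b, IsLonelyCutEdge E r t y :=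
  edge_between_bags_hits_tail_general E r hred

end OutBranching
end

section
/- Let D be a connected rooted digraph to which none of the reduction rules R1–R6 applies, and let S ⊆ V(D_c) be any set of vertices of the contracted graph D_c that contains the root and every special vertex of D_c. Then there exist weak bipaths P_1,…,P_q in D_c such that: (i) the sets of internal vertices of P_1,…,P_q form a partition of V(D_c) ∖ S; (ii) the two extremities of each P_i belong to S and are distinct; (iii) every out-neighbor of an internal vertex of P_i either lies on P_i or belongs to S. -/
namespace OutBranching

variable {V : Type}

/-!
Outside `S`, every vertex `w` of `D_c` has exactly two in-neighbours, and `w` has edges back to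
both: a third in-neighbour or a one-way edge would make `w` special, and a single in-neighbour `p`
would contradict R4. The reason is that a bag is a single vertex or a lonely cut-edge, whose head
has in-degree one, so all edges entering the bag of `p` from outside end at one vertex `g`, and the
edge from `w` into that bag ends at `g` as well.

Hence the vertices outside `S` string together into chains that leave `S` and come back to it.
Every vertex is reachable from the root, which lies in `S`, so every vertex outside `S` lies on a
chain. A chain is determined by its first edge, so in a finite graph a chain that never returned to
`S` would repeat an edge; tracing a repeated edge back leads to the first edge, which leaves `S`.
A chain cannot return to the vertex where it started, by the same R4 argument, and two chains
sharing an internal vertex have the same internal vertices. The chains, one for each set of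
internal vertices, are the weak bipaths.
-/

section Chains

variable {W : Type} {E : W → W → Prop} {S : Set W}

/-- The weak-bipath condition at `y` for consecutive vertices `x, y, z`, with `x ≠ z`. -/
structure IsLink (E : W → W → Prop) (x y z : W) : Prop where
  ne : x ≠ z
  in_iff : ∀ w, E w y ↔ w = x ∨ w = z
  out_left : E y x
  out_right : E y z

theorem IsLink.symm {x y z : W} (h : IsLink E x y z) : IsLink E z y x :=
  ⟨h.ne.symm, fun w => (h.in_iff w).trans or_comm, h.out_right, h.out_left⟩

theorem exists_isLink {a w : W} (hin : (inN E w).ncard = 2) (hbid : ∀ u, E u w → E w u)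
    (ha : E a w) : ∃ b, IsLink E a w b := by
  obtain ⟨p, q, hpq, hpq'⟩ := Set.ncard_eq_two.mp hin
  have hiff : ∀ z, E z w ↔ z = p ∨ z = q := fun z => (Set.ext_iff.mp hpq' z).trans (by simp)
  have hlink : IsLink E p w q :=
    ⟨hpq, hiff, hbid p ((hiff p).2 (.inl rfl)), hbid q ((hiff q).2 (.inr rfl))⟩
  rcases (hiff a).1 ha with rfl | rfl
  exacts [⟨q, hlink⟩, ⟨p, hlink.symm⟩]

/-- A chain under construction: its last vertex `c (n + 1)` lies outside `S` but need not be a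
link yet. -/
structure IsPartialChain (E : W → W → Prop) (S : Set W) (c : ℕ → W) (n : ℕ) : Prop where
  start_mem : c 0 ∈ S
  notMem : ∀ k ≤ n, c (k + 1) ∉ S
  link : ∀ k < n, IsLink E (c k) (c (k + 1)) (c (k + 2))
  edge : E (c n) (c (n + 1))

structure IsChain (E : W → W → Prop) (S : Set W) (c : ℕ → W) (len : ℕ) : Prop where
  start_mem : c 0 ∈ S
  end_mem : c (len + 2) ∈ S
  notMem : ∀ k ≤ len, c (k + 1) ∉ S
  link : ∀ k ≤ len, IsLink E (c k) (c (k + 1)) (c (k + 2))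

def chainInterior (c : ℕ → W) (len : ℕ) : Set W := {w | ∃ k ≤ len, c (k + 1) = w}

namespace IsPartialChain

variable {c : ℕ → W} {n : ℕ}

theorem of_succ (h : IsPartialChain E S c (n + 1)) : IsPartialChain E S c n :=
  ⟨h.start_mem, fun k hk => h.notMem k (by omega), fun k hk => h.link k (by omega),
    ((h.link n n.lt_succ_self).in_iff _).2 (.inl rfl)⟩

theorem snoc {x : W} (h : IsPartialChain E S c n) (hl : IsLink E (c n) (c (n + 1)) x)
    (hx : x ∉ S) : IsPartialChain E S (Function.update c (n + 2) x) (n + 1) := by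
  have hc : ∀ k ≤ n + 1, Function.update c (n + 2) x k = c k :=
    fun k hk => Function.update_of_ne (by omega) _ _
  refine ⟨by rw [hc 0 (by omega)]; exact h.start_mem, fun k hk => ?_, fun k hk => ?_, ?_⟩
  · rcases Nat.lt_or_ge k (n + 1) with hk' | hk'
    · rw [hc (k + 1) hk']; exact h.notMem k (by omega)
    · obtain rfl : k = n + 1 := by omega
      rwa [Function.update_self]
  · rw [hc k (by omega), hc (k + 1) (by omega)]
    rcases Nat.lt_or_ge k n with hk' | hk'
    · rw [hc (k + 2) (by omega)]; exact h.link k hk'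
    · obtain rfl : k = n := by omega
      rwa [Function.update_self]
  · rw [hc (n + 1) le_rfl, Function.update_self]; exact hl.out_right

theorem isChain_update {x : W} (h : IsPartialChain E S c n)
    (hl : IsLink E (c n) (c (n + 1)) x) (hx : x ∈ S) :
    IsChain E S (Function.update c (n + 2) x) n := by
  have hc : ∀ k ≤ n + 1, Function.update c (n + 2) x k = c k :=
    fun k hk => Function.update_of_ne (by omega) _ _
  refine ⟨by rw [hc 0 (by omega)]; exact h.start_mem, by rwa [Function.update_self],
    fun k hk => by rw [hc (k + 1) (by omega)]; exact h.notMem k hk, fun k hk => ?_⟩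
  rw [hc k (by omega), hc (k + 1) (by omega)]
  rcases Nat.lt_or_ge k n with hk' | hk'
  · rw [hc (k + 2) (by omega)]; exact h.link k hk'
  · obtain rfl : k = n := by omega
    rwa [Function.update_self]

/-- A repeated edge would propagate back to the first edge, which leaves `S`. -/
theorem dart_ne (h : IsPartialChain E S c n) :
    ∀ i j, i < j → j ≤ n → c i = c j → c (i + 1) ≠ c (j + 1) := by
  intro i
  induction i with
  | zero =>
    intro j hj hjn h0
    obtain ⟨j, rfl⟩ : ∃ j', j = j' + 1 := ⟨j - 1, by omega⟩
    exact absurd (h0 ▸ h.start_mem) (h.notMem j (by omega))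
  | succ i ih =>
    intro j hij hjn h1 h2
    obtain ⟨j, rfl⟩ : ∃ j', j = j' + 1 := ⟨j - 1, by omega⟩
    have hli := h.link i (by omega)
    have hlj := h.link j (by omega)
    rcases ((hlj.in_iff (c i)).1 (h1 ▸ (hli.in_iff (c i)).2 (.inl rfl))) with hij' | hij'
    · exact ih j (by omega) (by omega) hij' h1
    · exact hli.ne (hij'.trans h2.symm)

theorem lt_card [Finite W] (h : IsPartialChain E S c n) : n < Nat.card (W × W) := by
  have hinj : Function.Injective fun k : Fin (n + 1) => (c k, c (k + 1)) := by
    intro i j hij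
    simp only [Prod.mk.injEq] at hij
    by_contra hne
    rcases lt_or_gt_of_ne (Fin.val_ne_of_ne hne) with hlt | hlt
    · exact h.dart_ne i j hlt (by omega) hij.1 hij.2
    · exact h.dart_ne j i hlt (by omega) hij.1.symm hij.2.symm
  simpa using Nat.card_le_card_of_injective _ hinj

end IsPartialChain

theorem exists_isPartialChain_of_reaches {r v : W} (hr : r ∈ S)
    (hin : ∀ w ∉ S, (inN E w).ncard = 2) (hbid : ∀ w ∉ S, ∀ u, E u w → E w u)
    (hv : Reaches E r v) : v ∈ S ∨ ∃ c n, IsPartialChain E S c n ∧ c (n + 1) = v := by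
  induction hv with
  | refl => exact .inl hr
  | @tail u v _ huv ih =>
    by_cases hvS : v ∈ S
    · exact .inl hvS
    refine .inr ?_
    rcases ih with huS | ⟨c, n, hc, rfl⟩
    · refine ⟨fun k => if k = 0 then u else v, 0, ⟨huS, ?_, nofun, huv⟩, rfl⟩
      intro k hk
      obtain rfl : k = 0 := by omega
      exact hvS
    obtain ⟨x, hl⟩ := exists_isLink (hin _ (hc.notMem n le_rfl)) (hbid _ (hc.notMem n le_rfl))
      hc.edge
    rcases (hl.in_iff v).1 (hbid v hvS _ huv) with rfl | rfl
    · rcases n with _ | n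
      · exact absurd hc.start_mem hvS
      · exact ⟨c, n, hc.of_succ, rfl⟩
    · exact ⟨_, n + 1, hc.snoc hl hvS, Function.update_self ..⟩

theorem exists_isChain_mem_chainInterior [Finite W] {r w : W} (hreach : ∀ v, Reaches E r v)
    (hr : r ∈ S) (hin : ∀ w ∉ S, (inN E w).ncard = 2) (hbid : ∀ w ∉ S, ∀ u, E u w → E w u)
    (hw : w ∉ S) : ∃ c len, IsChain E S c len ∧ w ∈ chainInterior c len := by
  let N : Set ℕ := {n | ∃ c, IsPartialChain E S c n ∧ w ∈ chainInterior c n}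
  have hN : N.Nonempty := by
    rcases exists_isPartialChain_of_reaches hr hin hbid (hreach w) with hwS | ⟨c, n, hc, hcw⟩
    · exact absurd hwS hw
    · exact ⟨n, c, hc, n, le_rfl, hcw⟩
  have hNbdd : BddAbove N := ⟨Nat.card (W × W), fun n ⟨_, hc, _⟩ => hc.lt_card.le⟩
  -- a longest partial chain through `w` cannot be continued outside `S`
  obtain ⟨c, hc, k, hk, rfl⟩ := Nat.sSup_mem hN hNbdd
  set n := sSup N
  obtain ⟨x, hl⟩ := exists_isLink (hin _ (hc.notMem n le_rfl)) (hbid _ (hc.notMem n le_rfl))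
    hc.edge
  have hupd : Function.update c (n + 2) x (k + 1) = c (k + 1) :=
    Function.update_of_ne (by omega) _ _
  by_cases hx : x ∈ S
  · exact ⟨_, n, hc.isChain_update hl hx, k, hk, hupd⟩
  · have : n + 1 ∈ N := ⟨_, hc.snoc hl hx, k, by omega, hupd⟩
    exact absurd (le_csSup hNbdd this) (by omega)

theorem forall_le_of_iff_succ {p : ℕ → Prop} {n t : ℕ} (hstep : ∀ k < n, p k ↔ p (k + 1))
    (ht : t ≤ n) (hp : p t) : ∀ k ≤ n, p k := by
  have h0 : ∀ k ≤ n, p k ↔ p 0 := by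
    intro k hk
    induction k with
    | zero => rfl
    | succ k ih => exact (hstep k (by omega)).symm.trans (ih (by omega))
  exact fun k hk => (h0 k hk).2 ((h0 t ht).1 hp)

namespace IsChain

variable {c : ℕ → W} {len : ℕ}

theorem injective (hc : IsChain E S c len) (hends : c 0 ≠ c (len + 2)) :
    ∀ i j, i < j → j ≤ len + 2 → c i ≠ c j := by
  intro i
  induction i using Nat.strong_induction_on with
  | _ i ih =>
    intro j hij hj hcij
    rcases i with _ | i
    · rcases Nat.lt_or_ge j (len + 2) with hj' | hj'
      · obtain ⟨j, rfl⟩ : ∃ j', j = j' + 1 := ⟨j - 1, by omega⟩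
        exact hc.notMem j (by omega) (hcij ▸ hc.start_mem)
      · exact hends (by rwa [show j = len + 2 by omega] at hcij)
    obtain ⟨j, rfl⟩ : ∃ j', j = j' + 1 := ⟨j - 1, by omega⟩
    have hjlen : j ≤ len := by
      by_contra
      exact hc.notMem i (by omega) (by rw [hcij, show j + 1 = len + 2 by omega]; exact hc.end_mem)
    rcases ((hc.link j hjlen).in_iff (c i)).1
        (hcij ▸ ((hc.link i (by omega)).in_iff (c i)).2 (.inl rfl)) with h | h
    · exact ih i (by omega) j (by omega) (by omega) h
    · exact ih i (by omega) (j + 2) (by omega) (by omega) h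

theorem mem_of_inN_mem_chainInterior (hc : IsChain E S c len) {u v : W}
    (hv : v ∈ chainInterior c len) (huv : E u v) :
    u = c 0 ∨ u = c (len + 2) ∨ u ∈ chainInterior c len := by
  obtain ⟨k, hk, rfl⟩ := hv
  rcases ((hc.link k hk).in_iff u).1 huv with rfl | rfl
  · rcases k with _ | k
    exacts [.inl rfl, .inr (.inr ⟨k, by omega, rfl⟩)]
  · rcases Nat.lt_or_ge k len with hk' | hk'
    · exact .inr (.inr ⟨k + 1, hk', rfl⟩)
    · exact .inr (.inl (by rw [show len = k by omega]))

theorem chainInterior_subset_compl (hc : IsChain E S c len) : chainInterior c len ⊆ Sᶜ := by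
  rintro _ ⟨k, hk, rfl⟩
  exact hc.notMem k hk

theorem chainInterior_subset (hc : IsChain E S c len) {T : Set W}
    (hT : ∀ v ∈ T, ∀ u, E u v → u ∉ S → u ∈ T) {k : ℕ} (hk : k ≤ len) (hkT : c (k + 1) ∈ T) :
    chainInterior c len ⊆ T := by
  have hstep : ∀ i < len, c (i + 1) ∈ T ↔ c (i + 2) ∈ T := fun i hi =>
    ⟨fun h => hT _ h _ (((hc.link i hi.le).in_iff _).2 (.inr rfl)) (hc.notMem (i + 1) hi),
      fun h => hT _ h _ (((hc.link (i + 1) hi).in_iff _).2 (.inl rfl)) (hc.notMem i hi.le)⟩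
  rintro _ ⟨i, hi, rfl⟩
  exact forall_le_of_iff_succ (p := fun i => c (i + 1) ∈ T) hstep hk hkT i hi

theorem chainInterior_eq {c' : ℕ → W} {len' : ℕ} (hc : IsChain E S c len)
    (hc' : IsChain E S c' len') {w : W} (hw : w ∈ chainInterior c len)
    (hw' : w ∈ chainInterior c' len') : chainInterior c len = chainInterior c' len' := by
  have hclosed : ∀ {c len}, IsChain E S c len →
      ∀ v ∈ chainInterior c len, ∀ u, E u v → u ∉ S → u ∈ chainInterior c len := by
    intro c len hc v hv u huv huS
    rcases hc.mem_of_inN_mem_chainInterior hv huv with rfl | rfl | hu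
    exacts [absurd hc.start_mem huS, absurd hc.end_mem huS, hu]
  obtain ⟨k, hk, rfl⟩ := hw
  obtain ⟨k', hk', hkk'⟩ := hw'
  exact (hc.chainInterior_subset (hclosed hc') hk (hkk' ▸ ⟨k', hk', rfl⟩)).antisymm
    (hc'.chainInterior_subset (hclosed hc) hk' (hkk' ▸ ⟨k, hk, rfl⟩))

def toWeakBipath (hc : IsChain E S c len) (hends : c 0 ≠ c (len + 2)) : WeakBipath E where
  len := len
  u i := c i
  inj i j hij := by
    by_contra hne
    rcases lt_or_gt_of_ne (Fin.val_ne_of_ne hne) with hlt | hlt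
    · exact hc.injective hends i j hlt (by omega) hij
    · exact hc.injective hends j i hlt (by omega) hij.symm
  cond i j k hji hik := by
    obtain ⟨-, hiff, hj, hk⟩ := hc.link j (by omega)
    rw [← hik, ← hji]
    exact ⟨hiff, hj, hk⟩

theorem toWeakBipath_internal (hc : IsChain E S c len) (hends : c 0 ≠ c (len + 2)) :
    (hc.toWeakBipath hends).internal = chainInterior c len := by
  ext w
  constructor
  · rintro ⟨i, hi0, hi, rfl⟩
    exact ⟨i - 1, by simp only [toWeakBipath] at hi; omega, by
      simp only [toWeakBipath]; congr 1; omega⟩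
  · rintro ⟨k, hk, rfl⟩
    exact ⟨⟨k + 1, by simp only [toWeakBipath]; omega⟩, by simp, by simp [toWeakBipath, hk], rfl⟩

end IsChain

theorem exists_weakBipath_decomposition [Finite W] {r : W} (hreach : ∀ v, Reaches E r v)
    (hr : r ∈ S) (hin : ∀ w ∉ S, (inN E w).ncard = 2) (hbid : ∀ w ∉ S, ∀ u, E u w → E w u)
    (hends : ∀ c len, IsChain E S c len → c 0 ≠ c (len + 2)) :
    ∃ (q : ℕ) (P : Fin q → WeakBipath E),
      (∀ w, w ∉ S → ∃! i, w ∈ (P i).internal) ∧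
      (∀ i, ∀ w ∈ (P i).internal, w ∉ S) ∧
      (∀ i, (P i).first ∈ S ∧ (P i).last ∈ S ∧ (P i).first ≠ (P i).last) ∧
      (∀ i, ∀ w ∈ (P i).internal, ∀ x, E w x → x ∈ Set.range (P i).u ∨ x ∈ S) := by
  let interiors : Set (Set W) := {T | ∃ c len, IsChain E S c len ∧ chainInterior c len = T}
  obtain ⟨q, ⟨e⟩⟩ := Finite.exists_equiv_fin interiors
  choose c len hc hcT using fun i => (e.symm i).2
  let P i := (hc i).toWeakBipath (hends _ _ (hc i))
  have hP : ∀ i, (P i).internal = chainInterior (c i) (len i) :=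
    fun i => (hc i).toWeakBipath_internal _
  refine ⟨q, P, fun w hw => ?_, fun i => ?_, fun i => ?_, fun i w hw x hwx => ?_⟩
  · obtain ⟨c', len', hc', hw'⟩ := exists_isChain_mem_chainInterior hreach hr hin hbid hw
    refine ⟨e ⟨_, c', len', hc', rfl⟩, ?_, fun i hi => ?_⟩
    · show w ∈ (P _).internal
      rwa [hP, hcT, e.symm_apply_apply]
    · replace hi : w ∈ (P i).internal := hi
      rw [hP] at hi
      rw [← e.symm_apply_eq]
      exact Subtype.ext ((hcT i).symm.trans ((hc i).chainInterior_eq hc' hi hw'))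
  · rw [hP]
    exact (hc i).chainInterior_subset_compl
  · exact ⟨(hc i).start_mem, (hc i).end_mem, hends _ _ (hc i)⟩
  · rw [hP] at hw
    by_cases hxS : x ∈ S
    · exact .inr hxS
    refine .inl ?_
    rcases (hc i).mem_of_inN_mem_chainInterior hw (hbid x hxS w hwx) with rfl | rfl | ⟨k, hk, rfl⟩
    exacts [⟨0, rfl⟩, ⟨Fin.last _, rfl⟩, ⟨⟨k + 1, by simp only [P, IsChain.toWeakBipath]; omega⟩, rfl⟩]

end Chains

section Contraction

variable {E : V → V → Prop} {r : V}

namespace IsCutEdge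

variable {t h : V}

theorem not_reaches_head_s16 (hconn : Connected E r) (hce : IsCutEdge E r t h) :
    ¬ Reaches (delEdge E t h) r h := by
  intro hreach
  obtain ⟨-, w, hw⟩ := hce
  have key : ∀ z, Reaches E r z → Reaches (delEdge E t h) r z := fun z hz => by
    induction hz with
    | refl => exact .refl
    | @tail b c _ hbc ih =>
      by_cases hdel : b = t ∧ c = h
      · exact hdel.2 ▸ hreach
      · exact ih.tail ⟨hbc, hdel⟩
  exact hw (key w (hconn w))

theorem ne_s16 (hconn : Connected E r) (hce : IsCutEdge E r t h) : t ≠ h := by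
  rintro rfl
  obtain ⟨-, w, hw⟩ := hce
  have key : ∀ z, Reaches E r z → Reaches (delEdge E t t) r z := fun z hz => by
    induction hz with
    | refl => exact .refl
    | @tail b c _ hbc ih =>
      by_cases hdel : b = t ∧ c = t
      · obtain ⟨rfl, rfl⟩ := hdel
        exact ih
      · exact ih.tail ⟨hbc, hdel⟩
  exact hw (key w (hconn w))

theorem eq_of_adj_head_s16 (hconn : Connected E r) (hR4 : Rule4NA E r) (hce : IsCutEdge E r t h)
    {x : V} (hx : E x h) : x = t := by
  by_contra hxt
  refine hR4 ⟨h, x, hx, fun ⟨_, _, hpath⟩ => hce.not_reaches_head_s16 hconn ?_⟩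
  refine (Relation.ReflTransGen.mono (fun a b hab => ⟨hab.1, ?_⟩) _ _ hpath).tail
    ⟨hx, fun h' => hxt h'.1⟩
  rintro ⟨rfl, rfl⟩
  exact hab.2.1 ⟨hce.1, Ne.symm hxt⟩

/-- Otherwise `h` would be a cut-vertex entered only from `t`, against R2. -/
theorem not_isCutEdge_head (hconn : Connected E r) (hroot : ∀ u, ¬ E u r) (hR2 : Rule2NA E r)
    (hR4 : Rule4NA E r) (h₁ : IsCutEdge E r t h) {g : V} (h₂ : IsCutEdge E r h g) : False := by
  refine (hR2 h ⟨fun hr => hroot t (hr ▸ h₁.1), g, (h₂.ne_s16 hconn).symm, ?_⟩).1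
    ⟨t, h₁.1, fun y hy => h₁.eq_of_adj_head_s16 hconn hR4 hy⟩
  rintro ⟨-, -, hpath⟩
  rcases hpath.cases_tail with rfl | ⟨b, -, hbg, hb, -⟩
  · exact hroot h h₂.1
  · exact hb (h₂.eq_of_adj_head_s16 hconn hR4 hbg)

end IsCutEdge

theorem cmk_eq_cmk_iff (hconn : Connected E r) (hroot : ∀ u, ¬ E u r) (hR2 : Rule2NA E r)
    (hR4 : Rule4NA E r) {x y : V} :
    cmk (lonelyRel E r) x = cmk (lonelyRel E r) y ↔
      x = y ∨ lonelyRel E r x y ∨ lonelyRel E r y x := by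
  refine ⟨fun hxy => ?_, ?_⟩
  · have hgen : Relation.EqvGen (lonelyRel E r) x y := Quotient.eq''.mp hxy
    clear hxy
    induction hgen with
    | rel a b hab => exact .inr (.inl hab)
    | refl => exact .inl rfl
    | symm a b _ ih =>
      rcases ih with rfl | hab | hba
      exacts [.inl rfl, .inr (.inr hab), .inr (.inl hba)]
    | trans a b c _ _ ihab ihbc =>
      rcases ihab with rfl | hab | hba
      · exact ihbc
      · rcases ihbc with rfl | hbc | hcb
        · exact .inr (.inl hab)
        · exact (hab.1.not_isCutEdge_head hconn hroot hR2 hR4 hbc.1).elim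
        · exact .inl (hcb.1.eq_of_adj_head_s16 hconn hR4 hab.1.1)
      · rcases ihbc with rfl | hbc | hcb
        · exact .inr (.inr hba)
        · exact .inl (hba.2 c hbc.1).symm
        · exact (hcb.1.not_isCutEdge_head hconn hroot hR2 hR4 hba.1).elim
  · rintro (rfl | hxy | hyx)
    · rfl
    · exact Quotient.sound (Relation.EqvGen.rel _ _ hxy)
    · exact (Quotient.sound (Relation.EqvGen.rel _ _ hyx)).symm

theorem exists_bag_entry (hconn : Connected E r) (hroot : ∀ u, ¬ E u r) (hR2 : Rule2NA E r)
    (hR4 : Rule4NA E r) (x : V) :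
    ∃ g, ∀ a b, E a b →
      cmk (lonelyRel E r) b = cmk (lonelyRel E r) x →
      cmk (lonelyRel E r) a ≠ cmk (lonelyRel E r) x → b = g := by
  have hiff := @cmk_eq_cmk_iff _ _ _ hconn hroot hR2 hR4
  by_cases hin : ∃ t, lonelyRel E r t x
  · obtain ⟨t, ht⟩ := hin
    refine ⟨t, fun a b hab hb ha => ?_⟩
    rcases hiff.1 hb with rfl | hbx | hxb
    · exact absurd (ht.1.eq_of_adj_head_s16 hconn hR4 hab ▸ hiff.2 (.inr (.inl ht))) ha
    · exact ht.1.eq_of_adj_head_s16 hconn hR4 hbx.1.1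
    · exact absurd (congrArg _ (hxb.1.eq_of_adj_head_s16 hconn hR4 hab)) ha
  · refine ⟨x, fun a b hab hb ha => ?_⟩
    rcases hiff.1 hb with rfl | hbx | hxb
    · rfl
    · exact absurd ⟨b, hbx⟩ hin
    · exact absurd (congrArg _ (hxb.1.eq_of_adj_head_s16 hconn hR4 hab)) ha

theorem not_contractedE_contractedRoot (hconn : Connected E r) (hroot : ∀ u, ¬ E u r)
    (hR2 : Rule2NA E r) (hR4 : Rule4NA E r) (a : ContractedVert E r) :
    ¬ contractedE E r a (contractedRoot E r) := by
  rintro ⟨hne, x, y, rfl, hy, hxy⟩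
  rcases (cmk_eq_cmk_iff hconn hroot hR2 hR4).1 hy with rfl | hyr | hry
  · exact hroot x hxy
  · exact hroot y hyr.1.1
  · exact hne (by rw [hry.1.eq_of_adj_head_s16 hconn hR4 hxy]; rfl)

theorem reaches_contractedE (hconn : Connected E r) (a : ContractedVert E r) :
    Reaches (contractedE E r) (contractedRoot E r) a := by
  induction a using Quotient.ind with
  | _ x =>
    change Reaches _ _ (cmk (lonelyRel E r) x)
    induction hconn x with
    | refl => exact .refl
    | @tail b c _ hbc ih =>
      by_cases hbc' : cmk (lonelyRel E r) b = cmk (lonelyRel E r) c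
      · exact hbc' ▸ ih
      · exact ih.tail ⟨hbc', b, c, rfl, rfl, hbc⟩

theorem not_contractedE_of_inN_subset (hconn : Connected E r) (hroot : ∀ u, ¬ E u r)
    (hR2 : Rule2NA E r) (hR4 : Rule4NA E r) {Y : Set (ContractedVert E r)}
    {A : ContractedVert E r} (hrY : contractedRoot E r ∉ Y) (hAY : A ∉ Y)
    (hY : ∀ b ∈ Y, inN (contractedE E r) b ⊆ insert A Y) {b : ContractedVert E r}
    (hb : b ∈ Y) : ¬ contractedE E r b A := by
  intro hbA
  by_cases hAr : A = contractedRoot E r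
  · exact not_contractedE_contractedRoot hconn hroot hR2 hR4 b (hAr ▸ hbA)
  obtain ⟨-, x, y, rfl, rfl, hxy⟩ := hbA
  obtain ⟨g, hentry⟩ := exists_bag_entry hconn hroot hR2 hR4 y
  obtain rfl : y = g := hentry x y hxy rfl (fun h => hAY (h ▸ hb))
  -- By R4, `x` is reachable from `r` avoiding the other in-neighbours of `y`; such a path
  -- can enter neither `Y` nor the bag of `y`.
  refine hR4 ⟨y, x, hxy, fun ⟨_, _, hpath⟩ => ?_⟩
  suffices ∀ z, Relation.ReflTransGen
      (fun a c => E a c ∧ a ∉ {v | E v y ∧ v ≠ x} ∧ c ∉ {v | E v y ∧ v ≠ x}) r z →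
      cmk (lonelyRel E r) z ∉ insert (cmk (lonelyRel E r) y) Y from this x hpath (.inr hb)
  intro z hz
  induction hz with
  | refl => exact fun h => h.elim (fun h => hAr h.symm) hrY
  | @tail a c _ hac ih =>
    rintro (hc | hc)
    · have hac' : cmk (lonelyRel E r) a ≠ cmk (lonelyRel E r) c := fun h => ih (.inl (h.trans hc))
      obtain rfl : c = y := hentry a c hac.1 hc (fun h => hac' (h.trans hc.symm))
      by_cases hax : a = x
      · exact ih (.inr (hax ▸ hb))
      · exact hac.2.1 ⟨hac.1, hax⟩
    · by_cases hac' : cmk (lonelyRel E r) a = cmk (lonelyRel E r) c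
      · exact ih (.inr (hac' ▸ hc))
      · exact ih (hY _ hc ⟨hac', a, c, rfl, rfl, hac.1⟩)

instance ContractedVert.finite [Finite V] : Finite (ContractedVert E r) := Quotient.finite _

theorem ncard_inN_contractedE_eq_two [Finite V] (hconn : Connected E r)
    (hroot : ∀ u, ¬ E u r) (hR2 : Rule2NA E r) (hR4 : Rule4NA E r) {w : ContractedVert E r}
    (hw : w ≠ contractedRoot E r) (hsp : w ∉ sp (contractedE E r)) :
    (inN (contractedE E r) w).ncard = 2 := by
  have hlt : (inN (contractedE E r) w).ncard < 3 := not_le.1 fun h => hsp (.inl h)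
  have hpos : 0 < (inN (contractedE E r) w).ncard := by
    refine (Set.ncard_pos (Set.toFinite _)).2 ?_
    rcases (reaches_contractedE hconn w).cases_tail with h | ⟨p, -, hp⟩
    exacts [absurd h hw, ⟨p, hp⟩]
  have hne : (inN (contractedE E r) w).ncard ≠ 1 := by
    rw [Ne, Set.ncard_eq_one]
    rintro ⟨p, hp⟩
    have hpw : p ∈ inN (contractedE E r) w := hp ▸ rfl
    refine not_contractedE_of_inN_subset hconn hroot hR2 hR4 (Y := {w}) (A := p)
      hw.symm (fun h => hpw.1 h) (fun b hb => ?_) rfl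
      (by_contra fun h => hsp (.inr ⟨p, hpw, h⟩))
    rw [Set.mem_singleton_iff.1 hb, hp]
    exact Set.singleton_subset_iff.2 (Set.mem_insert _ _)
  omega

theorem IsChain.start_ne_end (hconn : Connected E r) (hroot : ∀ u, ¬ E u r)
    (hR2 : Rule2NA E r) (hR4 : Rule4NA E r) {S : Set (ContractedVert E r)}
    (hrootS : contractedRoot E r ∈ S) {c : ℕ → ContractedVert E r} {len : ℕ}
    (hc : IsChain (contractedE E r) S c len) : c 0 ≠ c (len + 2) := by
  intro hends
  refine not_contractedE_of_inN_subset hconn hroot hR2 hR4 (Y := chainInterior c len)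
    (fun h => hc.chainInterior_subset_compl h hrootS)
    (fun h => hc.chainInterior_subset_compl h hc.start_mem) (fun b hb u hu => ?_)
    ⟨0, Nat.zero_le _, rfl⟩ (hc.link 0 (Nat.zero_le _)).out_left
  rcases hc.mem_of_inN_mem_chainInterior hb hu with h | h | h
  exacts [.inl h, .inl (h.trans hends.symm), .inr h]

end Contraction

/-- If none of the reduction rules R1–R6 applies to the connected rooted
digraph `D` and `S` is a set of vertices of `D_c` containing the root and all special
vertices of `D_c`, then there are weak bipaths `P₁,…,P_q` in `D_c` such that:
(i) their sets of internal vertices partition `V(D_c) ∖ S`;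
(ii) the two extremities of each `Pᵢ` belong to `S` and are distinct;
(iii) every out-neighbor of an internal vertex of `Pᵢ` lies on `Pᵢ` or belongs to `S`. -/
theorem weak_bipath_decomposition {V : Type} [Fintype V] (E : V → V → Prop) (r : V)
    (hroot : ∀ u, ¬ E u r) (hconn : Connected E r) (hred : Reduced6 E r)
    (S : Set (ContractedVert E r))
    (hrootS : contractedRoot E r ∈ S)
    (hspS : sp (contractedE E r) ⊆ S) :
    ∃ (q : ℕ) (P : Fin q → WeakBipath (contractedE E r)),
      (∀ w, w ∉ S → ∃! i, w ∈ (P i).internal) ∧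
      (∀ i, ∀ w ∈ (P i).internal, w ∉ S) ∧
      (∀ i, (P i).first ∈ S ∧ (P i).last ∈ S ∧ (P i).first ≠ (P i).last) ∧
      (∀ i, ∀ w ∈ (P i).internal, ∀ x, contractedE E r w x →
          x ∈ Set.range (P i).u ∨ x ∈ S) := by
  obtain ⟨⟨-, hR2, -, hR4⟩, -, -⟩ := hred
  have hw_root : ∀ w ∉ S, w ≠ contractedRoot E r := fun w hw h => hw (h ▸ hrootS)
  have hw_sp : ∀ w ∉ S, w ∉ sp (contractedE E r) := fun w hw h => hw (hspS h)
  refine exists_weakBipath_decomposition (reaches_contractedE hconn) hrootS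
    (fun w hw => ncard_inN_contractedE_eq_two hconn hroot hR2 hR4 (hw_root w hw) (hw_sp w hw))
    (fun w hw u hu => ?_) (fun c len hc => hc.start_ne_end hconn hroot hR2 hR4 hrootS)
  by_contra h
  exact hw_sp w hw (.inr ⟨u, hu, h⟩)

end OutBranching
end
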